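/- For symmetric positive definite matrices P0 and P1 of size n, the matrix U = P1^{-1/2} P0^{-1/2} (P0^{1/2} P1 P0^{1/2})^{1/2} is orthogonal, i.e., U U' = I. -/

import Mathlib

/-!
Since every square root involved is symmetric and `S^{1/2} S^{1/2} = S` for
`S = P0^{1/2} P1 P0^{1/2}`,
`U Uᵀ = P1^{-1/2} P0^{-1/2} S P0^{-1/2} P1^{-1/2} = P1^{-1/2} P1 P1^{-1/2} = 1`.
Both facts about `sqrtm` come from identifying it with the continuous functional calculus
applied to `Real.sqrt`.
-/

open Matrix

/-- The symmetric positive definite square root of a positive definite matrix. -/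
noncomputable def sqrtm {n : ℕ} {P : Matrix (Fin n) (Fin n) ℝ} (hP : P.PosDef) :
    Matrix (Fin n) (Fin n) ℝ :=
  hP.posSemidef.1.eigenvectorUnitary.1 *
    diagonal ((↑) ∘ (Real.sqrt ·) ∘ hP.posSemidef.1.eigenvalues) *
    (star hP.posSemidef.1.eigenvectorUnitary : Matrix (Fin n) (Fin n) ℝ)

/-- Squared Frobenius norm of a real matrix. -/
noncomputable def frobSq {n : ℕ} (M : Matrix (Fin n) (Fin n) ℝ) : ℝ := (M * Mᵀ).trace

theorem Matrix.inv_mul_inv_mul_mul_transpose_self_eq_one {m R : Type*} [Fintype m]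
    [DecidableEq m] [CommRing R] {A B T : Matrix m m R} (hA : IsUnit A.det) (hB : IsUnit B.det)
    (hAT : Aᵀ = A) (hBT : Bᵀ = B) (hTT : Tᵀ = T) (hT : T * T = A * (B * B) * A) :
    B⁻¹ * A⁻¹ * T * (B⁻¹ * A⁻¹ * T)ᵀ = 1 := by
  rw [transpose_mul, transpose_mul, hTT, transpose_nonsing_inv, transpose_nonsing_inv, hAT, hBT]
  calc B⁻¹ * A⁻¹ * T * (T * (A⁻¹ * B⁻¹)) = B⁻¹ * (A⁻¹ * (T * T) * A⁻¹) * B⁻¹ := by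
        simp only [Matrix.mul_assoc]
    _ = B⁻¹ * ((A⁻¹ * A) * (B * B) * (A * A⁻¹)) * B⁻¹ := by
        rw [hT]; simp only [Matrix.mul_assoc]
    _ = (B⁻¹ * B) * (B * B⁻¹) := by
        rw [nonsing_inv_mul _ hA, mul_nonsing_inv _ hA]
        simp only [Matrix.one_mul, Matrix.mul_one, Matrix.mul_assoc]
    _ = 1 := by rw [nonsing_inv_mul _ hB, mul_nonsing_inv _ hB, Matrix.one_mul]

section sqrtm

variable {n : ℕ} {P : Matrix (Fin n) (Fin n) ℝ}

theorem sqrtm_eq_cfc (hP : P.PosDef) : sqrtm hP = cfc Real.sqrt P := by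
  rw [hP.isHermitian.cfc_eq]
  rfl

theorem sqrtm_mul_self (hP : P.PosDef) : sqrtm hP * sqrtm hP = P := by
  rw [sqrtm_eq_cfc, ← cfc_mul Real.sqrt Real.sqrt P]
  conv_rhs => rw [← cfc_id' ℝ P hP.isHermitian]
  exact cfc_congr fun x hx =>
    Real.mul_self_sqrt ((posSemidef_iff_isHermitian_and_spectrum_nonneg.1 hP.posSemidef).2 hx)

theorem sqrtm_transpose (hP : P.PosDef) : (sqrtm hP)ᵀ = sqrtm hP := by
  rw [sqrtm_eq_cfc, ← conjTranspose_eq_transpose_of_trivial]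
  exact (cfc_predicate Real.sqrt P : IsSelfAdjoint _)

theorem isUnit_det_sqrtm (hP : P.PosDef) : IsUnit (sqrtm hP).det := by
  have h := (isUnit_iff_isUnit_det P).1 hP.isUnit
  rw [← sqrtm_mul_self hP, det_mul, IsUnit.mul_iff] at h
  exact h.1

end sqrtm

theorem stmt_0 {n : ℕ} {P0 P1 : Matrix (Fin n) (Fin n) ℝ}
    (hP0 : P0.PosDef) (hP1 : P1.PosDef)
    (hS : (sqrtm hP0 * P1 * sqrtm hP0).PosDef)
    (U : Matrix (Fin n) (Fin n) ℝ)
    (hU : U = (sqrtm hP1)⁻¹ * (sqrtm hP0)⁻¹ * sqrtm hS) :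
    U * Uᵀ = 1 := by
  subst hU
  refine inv_mul_inv_mul_mul_transpose_self_eq_one (isUnit_det_sqrtm hP0) (isUnit_det_sqrtm hP1)
    (sqrtm_transpose hP0) (sqrtm_transpose hP1) (sqrtm_transpose hS) ?_
  rw [sqrtm_mul_self hS, sqrtm_mul_self hP1]
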